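/- Let R be a commutative ring and let D{3}_2 = {(d_1,d_2,d_3) ∈ R^3 : d_i d_j d_k = 0 for all i,j,k and d_i^2·anything of total degree 3 vanishes, i.e., all products of three coordinates (with repetition) vanish}. Then the three inclusions i_{12}, i_{13}, i_{23} : D^2 → D{3}_2 (placing (d_1,d_2) in the indicated pair of slots and 0 elsewhere) are jointly surjective onto D{3}_2 in the following weak sense: an R-algebra homomorphism out of the Weil algebra W_{D{3}_2} is determined by its composites with the three maps W_{i_{jk}} : W_{D{3}_2} → W_{D^2}; equivalently, the three algebra maps W_{i_{jk}} are jointly injective. -/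

import Mathlib

/-!
Since every generator of `W_{D{3}₂}` squares to zero, the squarefree monomials span it, and the
cubic relation kills `x₁x₂x₃`; so an element is `c + Σ cᵢ xᵢ + Σ c_{ij} xᵢxⱼ`. The map `W_{i_{jk}}`
sends it to `c + c_j X + c_k Y + c_{jk} XY`, and `1, X, Y, XY` are linearly independent in
`W_{D²}`. Every coefficient is seen by one of the three pairs.
-/

set_option synthInstance.maxHeartbeats 1000000
set_option maxHeartbeats 1000000

open Finset

/-- The ideal of `R[X₁,X₂,X₃]` generated by the squares `Xᵢ²` together with all
monomials of degree `3` (indices with repetition). -/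
noncomputable abbrev d32Ideal (R : Type*) [CommRing R] : Ideal (MvPolynomial (Fin 3) R) :=
  Ideal.span ((Set.range fun i : Fin 3 => (MvPolynomial.X i : MvPolynomial (Fin 3) R) ^ 2) ∪
    {p | ∃ f : Fin 3 → Fin 3, p = ∏ k, MvPolynomial.X (f k)})

/-- The Weil algebra `W_{D{3}₂}`. -/
abbrev WeilD32 (R : Type*) [CommRing R] : Type _ :=
  MvPolynomial (Fin 3) R ⧸ d32Ideal R

/-- The ideal `(X², Y²)` of `R[X,Y]`. -/
noncomputable abbrev sq2Ideal (R : Type*) [CommRing R] : Ideal (MvPolynomial (Fin 2) R) :=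
  Ideal.span (Set.range fun i : Fin 2 => (MvPolynomial.X i : MvPolynomial (Fin 2) R) ^ 2)

/-- The Weil algebra `W_{D²} = R[X,Y]/(X²,Y²)`. -/
abbrev WeilD2 (R : Type*) [CommRing R] : Type _ :=
  MvPolynomial (Fin 2) R ⧸ sq2Ideal R

/-- `p` is the algebra map `W_{i_{jk}} : W_{D{3}₂} → W_{D²}` dual to the inclusion
`i_{jk} : D² → D{3}₂` placing the two coordinates in slots `j < k` and `0` elsewhere:
it sends `X_j ↦ X`, `X_k ↦ Y`, and the remaining variable to `0`. -/
def IsProjPair {R : Type*} [CommRing R] (j k : Fin 3)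
    (p : WeilD32 R →ₐ[R] WeilD2 R) : Prop :=
  p (Ideal.Quotient.mk (d32Ideal R) (MvPolynomial.X j)) =
      Ideal.Quotient.mk (sq2Ideal R) (MvPolynomial.X 0) ∧
    p (Ideal.Quotient.mk (d32Ideal R) (MvPolynomial.X k)) =
      Ideal.Quotient.mk (sq2Ideal R) (MvPolynomial.X 1) ∧
    ∀ l : Fin 3, l ≠ j → l ≠ k → p (Ideal.Quotient.mk (d32Ideal R) (MvPolynomial.X l)) = 0

open MvPolynomial

namespace MvPolynomial

variable {R σ A : Type*} [CommRing R] [CommRing A] [Algebra R A]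

/-- Multiplying a squarefree monomial by a square-zero generator gives `0` or another squarefree
monomial, so their span contains `1` and is stable under the generators. -/
theorem span_prod_X_eq_top_of_sq_eq_zero (f : MvPolynomial σ R →ₐ[R] A)
    (hf : Function.Surjective f) (hsq : ∀ i, f (X i) ^ 2 = 0) :
    Submodule.span R (Set.range fun s : Finset σ => ∏ i ∈ s, f (X i)) = ⊤ := by
  classical
  set S := Submodule.span R (Set.range fun s : Finset σ => ∏ i ∈ s, f (X i))
  have mul_X_mem : ∀ y ∈ S, ∀ i, y * f (X i) ∈ S := by
    intro y hy i
    induction hy using Submodule.span_induction with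
    | mem _ hy =>
      obtain ⟨s, rfl⟩ := hy
      dsimp only
      by_cases hi : i ∈ s
      · rw [← Finset.mul_prod_erase s _ hi, mul_right_comm, ← sq, hsq, zero_mul]
        exact S.zero_mem
      · rw [mul_comm, ← Finset.prod_insert (f := fun j => f (X j)) hi]
        exact Submodule.subset_span ⟨_, rfl⟩
    | zero => simp
    | add y z _ _ hy hz => simpa [add_mul] using S.add_mem hy hz
    | smul r y _ hy => simpa [smul_mul_assoc] using S.smul_mem r hy
  refine Submodule.eq_top_iff'.mpr fun y => ?_
  obtain ⟨P, rfl⟩ := hf y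
  induction P using MvPolynomial.induction_on with
  | C r =>
    rw [← algebraMap_eq, AlgHom.commutes, Algebra.algebraMap_eq_smul_one, ← Finset.prod_empty]
    exact S.smul_mem r (Submodule.subset_span ⟨∅, rfl⟩)
  | add P Q hP hQ => simpa using S.add_mem hP hQ
  | mul_X P i hP => simpa using mul_X_mem _ hP i

theorem coeff_eq_zero_of_mem_span_X_sq {q : MvPolynomial σ R}
    (hq : q ∈ Ideal.span (Set.range fun i => (X i : MvPolynomial σ R) ^ 2)) {m : σ →₀ ℕ}
    (hm : ∀ i, m i ≤ 1) : coeff m q = 0 := by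
  have hspan : (Set.range fun i => (X i : MvPolynomial σ R) ^ 2) =
      (fun s => monomial s (1 : R)) '' Set.range fun i => Finsupp.single i 2 := by
    rw [← Set.range_comp]
    simp [Function.comp_def, X_pow_eq_monomial]
  rw [hspan, mem_ideal_span_monomial_image] at hq
  by_contra hm0
  obtain ⟨-, ⟨i, rfl⟩, hle⟩ := hq m (mem_support_iff.mpr hm0)
  have := (Finsupp.single_le_iff.mp hle).trans (hm i)
  omega

end MvPolynomial

theorem Finset.sum_univ_finset_fin_three {M : Type*} [AddCommMonoid M] (f : Finset (Fin 3) → M) :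
    ∑ s, f s = f ∅ + f {0} + f {1} + f {0, 1} + f {2} + f {0, 2} + f {1, 2} + f {0, 1, 2} := by
  have : (Finset.univ : Finset (Finset (Fin 3))) =
      {∅, {0}, {1}, {0, 1}, {2}, {0, 2}, {1, 2}, {0, 1, 2}} := by
    decide
  simp +decide [this, Finset.sum_insert, add_assoc]

theorem WeilD2.coeffs_eq_zero_of_eq_zero {R : Type*} [CommRing R] {a b c d : R}
    (h : a • (1 : WeilD2 R) + b • Ideal.Quotient.mk (sq2Ideal R) (X 0) +
      c • Ideal.Quotient.mk (sq2Ideal R) (X 1) +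
      d • (Ideal.Quotient.mk (sq2Ideal R) (X 0) * Ideal.Quotient.mk (sq2Ideal R) (X 1)) = 0) :
    a = 0 ∧ b = 0 ∧ c = 0 ∧ d = 0 := by
  set e₀ : Fin 2 →₀ ℕ := Finsupp.single 0 1
  set e₁ : Fin 2 →₀ ℕ := Finsupp.single 1 1
  set q : MvPolynomial (Fin 2) R :=
    monomial 0 a + monomial e₀ b + monomial e₁ c + monomial (e₀ + e₁) d
  have hq : q ∈ sq2Ideal R := by
    have hq_eq : q = C a + C b * X 0 + C c * X 1 + C d * X 0 * X 1 := by
      simp only [q, e₀, e₁, monomial_add_single, C_mul_X_eq_monomial, pow_one, monomial_zero']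
    have mk_C_mul (r : R) (y : WeilD2 R) : Ideal.Quotient.mk _ (C r) * y = r • y :=
      (Algebra.smul_def r y).symm
    rw [← Ideal.Quotient.eq_zero_iff_mem, ← h, hq_eq]
    simp only [map_add, map_mul, mul_assoc, ← mk_C_mul, mul_one]
  have coeff_q (m : Fin 2 →₀ ℕ) (hm : ∀ i, m i ≤ 1) : coeff m q = 0 :=
    coeff_eq_zero_of_mem_span_X_sq hq hm
  refine ⟨?_, ?_, ?_, ?_⟩
  · simpa [q, coeff_monomial, e₀, e₁, Finsupp.ext_iff, Fin.forall_fin_two] using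
      coeff_q 0 (by simp)
  · simpa [q, coeff_monomial, e₀, e₁, Finsupp.ext_iff, Fin.forall_fin_two] using
      coeff_q e₀ (by simp [e₀, Finsupp.single_apply])
  · simpa [q, coeff_monomial, e₀, e₁, Finsupp.ext_iff, Fin.forall_fin_two] using
      coeff_q e₁ (by simp [e₁, Finsupp.single_apply])
  · simpa [q, coeff_monomial, e₀, e₁, Finsupp.ext_iff, Fin.forall_fin_two] using
      coeff_q (e₀ + e₁) (by simp [e₀, e₁, Finsupp.single_apply])

namespace WeilD32

variable {R : Type*} [CommRing R]

theorem mk_X_sq_eq_zero (i : Fin 3) : (Ideal.Quotient.mk (d32Ideal R) (X i)) ^ 2 = 0 := by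
  rw [← map_pow, Ideal.Quotient.eq_zero_iff_mem]
  exact Ideal.subset_span (Or.inl ⟨i, rfl⟩)

theorem mk_X_mul_mk_X_mul_mk_X_eq_zero :
    Ideal.Quotient.mk (d32Ideal R) (X 0) *
      (Ideal.Quotient.mk (d32Ideal R) (X 1) * Ideal.Quotient.mk (d32Ideal R) (X 2)) = 0 := by
  rw [← map_mul, ← map_mul, Ideal.Quotient.eq_zero_iff_mem]
  exact Ideal.subset_span (Or.inr ⟨![0, 1, 2], by simp [Fin.prod_univ_three, mul_assoc]⟩)

theorem exists_eq_sum_smul_prod (w : WeilD32 R) :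
    ∃ c : Finset (Fin 3) → R, ∑ s, c s • ∏ i ∈ s, Ideal.Quotient.mk (d32Ideal R) (X i) = w := by
  have hspan := span_prod_X_eq_top_of_sq_eq_zero (Ideal.Quotient.mkₐ R (d32Ideal R))
    (Ideal.Quotient.mkₐ_surjective R _) mk_X_sq_eq_zero
  simp only [Ideal.Quotient.mkₐ_eq_mk] at hspan
  exact (Submodule.mem_span_range_iff_exists_fun R).mp (hspan ▸ Submodule.mem_top)

end WeilD32

/-- The three algebra maps `W_{i₁₂}, W_{i₁₃}, W_{i₂₃} : W_{D{3}₂} → W_{D²}` are jointly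
injective: an `R`-algebra homomorphism out of `W_{D{3}₂}` is determined by its
composites with them (the algebraic content of the standard quasi-colimit
representation of `D{3}₂`). -/
theorem weilD32_jointly_injective {R : Type*} [CommRing R]
    (p₁₂ p₁₃ p₂₃ : WeilD32 R →ₐ[R] WeilD2 R)
    (h₁₂ : IsProjPair 0 1 p₁₂) (h₁₃ : IsProjPair 0 2 p₁₃) (h₂₃ : IsProjPair 1 2 p₂₃) :
    ∀ a b : WeilD32 R, p₁₂ a = p₁₂ b → p₁₃ a = p₁₃ b → p₂₃ a = p₂₃ b → a = b := by
  intro a b hab₁₂ hab₁₃ hab₂₃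
  obtain ⟨c, hc⟩ := WeilD32.exists_eq_sum_smul_prod (a - b)
  simp only [Finset.sum_univ_finset_fin_three, Finset.prod_empty, Finset.prod_singleton,
    Finset.prod_insert, Finset.mem_insert, Finset.mem_singleton, Fin.reduceEq, or_self,
    not_false_eq_true] at hc
  have e₁₂ := congrArg p₁₂ hc
  have e₁₃ := congrArg p₁₃ hc
  have e₂₃ := congrArg p₂₃ hc
  simp only [map_add, map_sub, map_smul, map_mul, map_one, smul_zero, mul_zero, zero_mul, add_zero,
    sub_self, h₁₂.1, h₁₂.2.1, h₁₂.2.2 2 (by decide) (by decide), hab₁₂, h₁₃.1, h₁₃.2.1,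
    h₁₃.2.2 1 (by decide) (by decide), hab₁₃, h₂₃.1, h₂₃.2.1, h₂₃.2.2 0 (by decide) (by decide),
    hab₂₃] at e₁₂ e₁₃ e₂₃
  obtain ⟨c₀, c₁, c₂, c₁₂⟩ := WeilD2.coeffs_eq_zero_of_eq_zero e₁₂
  obtain ⟨-, -, c₃, c₁₃⟩ := WeilD2.coeffs_eq_zero_of_eq_zero e₁₃
  obtain ⟨-, -, -, c₂₃⟩ := WeilD2.coeffs_eq_zero_of_eq_zero e₂₃
  rw [← sub_eq_zero, ← hc, c₀, c₁, c₂, c₃, c₁₂, c₁₃, c₂₃, WeilD32.mk_X_mul_mk_X_mul_mk_X_eq_zero]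
  simp
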